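/- Let p, q satisfy conditions (C₁) and (C₃), and suppose y ∈ C[0,1] ∩ C²(0,1] solves −(p(x)y′(x))′ = q(x) f(x,y(x)) on (0,1) with lim_{x→0⁺} p(x)y′(x) = 0 and α₂ y(1) + β₂ y′(1) = γ₂ (α₂ ≠ 0), where f is continuous and bounded along the solution. Then y satisfies y(x) = γ₂/α₂ + ∫₀¹ G(x,s) q(s) f(s,y(s)) ds, where G(x,s) = h(1) − h(max(x,s)) + (β₂/(α₂ p(1))), with h(x) = ∫₀ˣ dt/p(t). -/

import Mathlib

/-!
Write `F = q · f(·, y)`, `Q(x) = ∫₀ˣ F` and `K = h(1) - h`, so that `K' = -1/p`. Integrating the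
equation and using `p y' → 0` at `0` gives the flux identity `p y' = -Q`, i.e. `y' = K' Q`, on
`(0, 1]`. Splitting at `s = x`, `∫₀¹ K(max(x, s)) F(s) ds = K(x) Q(x) + ∫ₓ¹ K F` also has derivative
`K'(x) Q(x)` and vanishes at `x = 1`, hence `y(x) = y(1) + ∫₀¹ K(max(x, s)) F(s) ds`. Finally the
Robin condition with `y'(1) = -Q(1)/p(1)` gives `y(1) = γ₂/α₂ + β₂ Q(1)/(α₂ p(1))`.
-/

open MeasureTheory Filter Set Topology

section Calculus

variable {E : Type*} [NormedAddCommGroup E] [NormedSpace ℝ E] {a b : ℝ}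

theorem eqOn_Ioo_of_hasDerivAt_zero_of_tendsto {Φ : ℝ → E} {L : E}
    (hΦ : ∀ x ∈ Ioo a b, HasDerivAt Φ 0 x) (hlim : Tendsto Φ (𝓝[>] a) (𝓝 L)) :
    EqOn Φ (fun _ => L) (Ioo a b) := by
  intro t ht
  have hconst : EqOn (fun _ => Φ t) Φ (Ioo a b) := fun x hx =>
    isOpen_Ioo.is_const_of_deriv_eq_zero isPreconnected_Ioo
      (fun z hz => (hΦ z hz).differentiableAt.differentiableWithinAt)
      (fun z hz => (hΦ z hz).deriv) ht hx
  exact tendsto_nhds_unique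
    (tendsto_const_nhds.congr' (eventuallyEq_of_mem (Ioo_mem_nhdsGT (ht.1.trans ht.2)) hconst))
    hlim

theorem eq_of_hasDerivAt_zero_of_continuousOn_Icc [CompleteSpace E] {Φ : ℝ → E} (hab : a ≤ b)
    (hcont : ContinuousOn Φ (Icc a b)) (hΦ : ∀ x ∈ Ioo a b, HasDerivAt Φ 0 x) : Φ a = Φ b := by
  have := intervalIntegral.integral_eq_sub_of_hasDerivAt_of_le hab hcont hΦ
    intervalIntegrable_const
  rw [intervalIntegral.integral_zero] at this
  exact (sub_eq_zero.mp this.symm).symm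

theorem deriv_eq_of_tendsto_deriv_nhdsLT {f : ℝ → E} {L : E} (hab : a < b)
    (hf : ∀ x ∈ Ioc a b, DifferentiableAt ℝ f x) (hlim : Tendsto (deriv f) (𝓝[<] b) (𝓝 L)) :
    deriv f b = L :=
  (uniqueDiffWithinAt_Iic b).eq_deriv _
    (hf b (right_mem_Ioc.2 hab)).hasDerivAt.hasDerivWithinAt
    (hasDerivWithinAt_Iic_of_tendsto_deriv
      (fun x hx => (hf x (Ioo_subset_Ioc_self hx)).differentiableWithinAt)
      ((hf b (right_mem_Ioc.2 hab)).continuousAt.continuousWithinAt)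
      (Ioo_mem_nhdsLT hab) hlim)

theorem IntervalIntegrable.continuousOn_primitive_Icc {F : ℝ → E} (hab : a ≤ b)
    (hF : IntervalIntegrable F volume a b) :
    ContinuousOn (fun x => ∫ s in a..x, F s) (Icc a b) := by
  simpa [uIcc_of_le hab] using intervalIntegral.continuousOn_primitive_interval' hF left_mem_uIcc

theorem IntervalIntegrable.continuousOn_primitive_left_Icc {F : ℝ → E} (hab : a ≤ b)
    (hF : IntervalIntegrable F volume a b) :
    ContinuousOn (fun x => ∫ s in x..b, F s) (Icc a b) := by
  simpa [uIcc_of_le hab] using intervalIntegral.continuousOn_primitive_interval_left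
    ((intervalIntegrable_iff_integrableOn_Icc_of_le hab).1 hF |>.mono_set (uIcc_of_le hab).subset)

theorem hasDerivAt_integral_of_continuousOn_Ioo [CompleteSpace E] {F : ℝ → E} {t : ℝ}
    (hF : IntervalIntegrable F volume a b) (hFc : ContinuousOn F (Ioo a b)) (ht : t ∈ Ioo a b) :
    HasDerivAt (fun x => ∫ s in a..x, F s) (F t) t :=
  intervalIntegral.integral_hasDerivAt_right
    (hF.mono_set (uIcc_subset_uIcc left_mem_uIcc (Ioo_subset_Icc_self.trans Icc_subset_uIcc ht)))
    (hFc.stronglyMeasurableAtFilter isOpen_Ioo t ht) (hFc.continuousAt (Ioo_mem_nhds ht.1 ht.2))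

end Calculus

theorem IntervalIntegrable.mul_bdd_of_continuousOn_Ioc {g φ : ℝ → ℝ} {a b C : ℝ} (hab : a ≤ b)
    (hg : IntervalIntegrable g volume a b) (hφ : ContinuousOn φ (Ioc a b))
    (hC : ∀ x ∈ Ioc a b, |φ x| ≤ C) : IntervalIntegrable (fun x => g x * φ x) volume a b := by
  rw [intervalIntegrable_iff_integrableOn_Ioc_of_le hab] at hg ⊢
  exact hg.mul_bdd (hφ.aestronglyMeasurable measurableSet_Ioc)
    (ae_restrict_of_forall_mem measurableSet_Ioc hC)

section MaxKernel

variable {K F : ℝ → ℝ} {a b : ℝ}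

theorem intervalIntegrable_comp_max_mul (hab : a ≤ b) (hK : ContinuousOn K (Icc a b))
    (hF : IntervalIntegrable F volume a b) {x : ℝ} (hx : x ∈ Icc a b) :
    IntervalIntegrable (fun s => K (max x s) * F s) volume a b := by
  refine hF.continuousOn_mul (hK.comp (continuous_const.max continuous_id).continuousOn ?_)
  rw [uIcc_of_le hab]
  exact fun s hs => ⟨hx.1.trans (le_max_left _ _), max_le hx.2 hs.2⟩

theorem integral_comp_max_mul_eq (hab : a ≤ b) (hK : ContinuousOn K (Icc a b))
    (hF : IntervalIntegrable F volume a b) {x : ℝ} (hx : x ∈ Icc a b) :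
    ∫ s in a..b, K (max x s) * F s = K x * (∫ s in a..x, F s) + ∫ s in x..b, K s * F s := by
  have hKF := intervalIntegrable_comp_max_mul hab hK hF hx
  have hx' : x ∈ uIcc a b := Icc_subset_uIcc hx
  rw [← intervalIntegral.integral_add_adjacent_intervals
    (hKF.mono_set (uIcc_subset_uIcc left_mem_uIcc hx'))
    (hKF.mono_set (uIcc_subset_uIcc hx' right_mem_uIcc)), ← intervalIntegral.integral_const_mul]
  congr 1 <;> refine intervalIntegral.integral_congr fun s hs => ?_
  · rw [uIcc_of_le hx.1] at hs
    simp only [max_eq_left hs.2]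
  · rw [uIcc_of_le hx.2] at hs
    simp only [max_eq_right hs.1]

theorem continuousOn_integral_comp_max_mul (hab : a ≤ b) (hK : ContinuousOn K (Icc a b))
    (hF : IntervalIntegrable F volume a b) :
    ContinuousOn (fun x => ∫ s in a..b, K (max x s) * F s) (Icc a b) := by
  have hKF : IntervalIntegrable (fun s => K s * F s) volume a b :=
    hF.continuousOn_mul (by rwa [uIcc_of_le hab])
  refine ((hK.mul (hF.continuousOn_primitive_Icc hab)).add
    (hKF.continuousOn_primitive_left_Icc hab)).congr fun x hx => ?_
  exact integral_comp_max_mul_eq hab hK hF hx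

theorem hasDerivAt_integral_comp_max_mul (hab : a ≤ b) (hK : ContinuousOn K (Icc a b))
    (hF : IntervalIntegrable F volume a b) (hFc : ContinuousOn F (Ioo a b)) {k t : ℝ}
    (ht : t ∈ Ioo a b) (hKt : HasDerivAt K k t) :
    HasDerivAt (fun x => ∫ s in a..b, K (max x s) * F s) (k * ∫ s in a..t, F s) t := by
  have hKF : IntervalIntegrable (fun s => K s * F s) volume a b :=
    hF.continuousOn_mul (by rwa [uIcc_of_le hab])
  have hKFc : ContinuousOn (fun s => K s * F s) (Ioo a b) := (hK.mono Ioo_subset_Icc_self).mul hFc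
  have htail : HasDerivAt (fun x => ∫ s in x..b, K s * F s) (-(K t * F t)) t :=
    intervalIntegral.integral_hasDerivAt_left
      (hKF.mono_set (uIcc_subset_uIcc (Icc_subset_uIcc (Ioo_subset_Icc_self ht)) right_mem_uIcc))
      (hKFc.stronglyMeasurableAtFilter isOpen_Ioo t ht)
      (hKFc.continuousAt (Ioo_mem_nhds ht.1 ht.2))
  refine ((hKt.mul (hasDerivAt_integral_of_continuousOn_Ioo hF hFc ht)).add htail
    |>.congr_deriv (by ring)).congr_of_eventuallyEq ?_
  filter_upwards [Ioo_mem_nhds ht.1 ht.2] with x hx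
  exact integral_comp_max_mul_eq hab hK hF (Ioo_subset_Icc_self hx)

end MaxKernel

section BoundaryValueProblem

variable {p y F : ℝ → ℝ} {a b : ℝ}

theorem eqOn_neg_integral_of_hasDerivAt_neg {w : ℝ → ℝ}
    (hF : IntervalIntegrable F volume a b) (hFc : ContinuousOn F (Ioo a b))
    (hw : ∀ x ∈ Ioo a b, HasDerivAt w (-F x) x) (hw0 : Tendsto w (𝓝[>] a) (𝓝 0)) :
    EqOn w (fun x => -∫ s in a..x, F s) (Ioo a b) := by
  intro x hx
  have hab : a < b := hx.1.trans hx.2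
  have hQ0 : Tendsto (fun x => ∫ s in a..x, F s) (𝓝[>] a) (𝓝 0) := by
    have := hF.continuousOn_primitive_Icc hab.le a (left_mem_Icc.2 hab.le)
    rw [ContinuousWithinAt, intervalIntegral.integral_same, nhdsWithin_Icc_eq_nhdsGE hab] at this
    exact this.mono_left (nhdsWithin_mono _ Ioi_subset_Ici_self)
  have := eqOn_Ioo_of_hasDerivAt_zero_of_tendsto (Φ := fun x => w x + ∫ s in a..x, F s)
    (fun t ht => ((hw t ht).add (hasDerivAt_integral_of_continuousOn_Ioo hF hFc ht)).congr_deriv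
      (neg_add_cancel _)) (by simpa using hw0.add hQ0) hx
  simp only at this ⊢
  linarith

theorem deriv_eq_neg_integral_div (hpc : ContinuousOn p (Ioc a b))
    (hp : ∀ x ∈ Ioc a b, p x ≠ 0) (hF : IntervalIntegrable F volume a b)
    (hFc : ContinuousOn F (Ioc a b)) (hyd : ∀ x ∈ Ioc a b, DifferentiableAt ℝ y x)
    (hode : ∀ x ∈ Ioo a b, HasDerivAt (fun t => p t * deriv y t) (-F x) x)
    (hbc : Tendsto (fun x => p x * deriv y x) (𝓝[>] a) (𝓝 0)) :
    EqOn (deriv y) (fun x => -(∫ s in a..x, F s) / p x) (Ioc a b) := by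
  intro x hx
  have hab : a < b := hx.1.trans_le hx.2
  have hinterior : EqOn (deriv y) (fun x => -(∫ s in a..x, F s) / p x) (Ioo a b) :=
    fun t ht => by
      have := eqOn_neg_integral_of_hasDerivAt_neg hF (hFc.mono Ioo_subset_Ioc_self) hode hbc ht
      simp only at this ⊢
      field_simp [hp t (Ioo_subset_Ioc_self ht)]
      linarith
  rcases hx.2.eq_or_lt with rfl | hxb
  · refine deriv_eq_of_tendsto_deriv_nhdsLT hab hyd ?_
    have hcont : ContinuousWithinAt (fun x => -(∫ s in a..x, F s) / p x) (Ioo a x) x :=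
      ((((hF.continuousOn_primitive_Icc hab.le).mono Ioc_subset_Icc_self).neg.div hpc hp) x
        (right_mem_Ioc.2 hab)).mono Ioo_subset_Ioc_self
    rw [ContinuousWithinAt, nhdsWithin_Ioo_eq_nhdsLT hab] at hcont
    exact hcont.congr' (eventuallyEq_of_mem (Ioo_mem_nhdsLT hab) hinterior.symm)
  · exact hinterior ⟨hx.1, hxb⟩

theorem eq_add_integral_comp_max_mul {K k : ℝ → ℝ} (hab : a ≤ b)
    (hyc : ContinuousOn y (Icc a b)) (hK : ContinuousOn K (Icc a b)) (hKb : K b = 0)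
    (hF : IntervalIntegrable F volume a b) (hFc : ContinuousOn F (Ioo a b))
    (hK' : ∀ t ∈ Ioo a b, HasDerivAt K (k t) t)
    (hy' : ∀ t ∈ Ioo a b, HasDerivAt y (k t * ∫ s in a..t, F s) t) {x : ℝ} (hx : x ∈ Icc a b) :
    y x = y b + ∫ s in a..b, K (max x s) * F s := by
  have hconst := eq_of_hasDerivAt_zero_of_continuousOn_Icc hx.2
    (Φ := fun x => y x - ∫ s in a..b, K (max x s) * F s)
    ((hyc.sub (continuousOn_integral_comp_max_mul hab hK hF)).mono (Icc_subset_Icc_left hx.1))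
    fun t ht => by
      have ht' : t ∈ Ioo a b := ⟨hx.1.trans_lt ht.1, ht.2⟩
      exact ((hy' t ht').sub (hasDerivAt_integral_comp_max_mul hab hK hF hFc ht'
        (hK' t ht'))).congr_deriv (sub_self _)
  have hvanish : ∫ s in a..b, K (max b s) * F s = 0 := by
    rw [integral_comp_max_mul_eq hab hK hF (right_mem_Icc.2 hab), hKb]
    simp
  simp only [hvanish] at hconst
  linarith

end BoundaryValueProblem

theorem solution_satisfies_fredholm_neumann_robin_general
    (p q : ℝ → ℝ) (f : ℝ → ℝ → ℝ) (y : ℝ → ℝ)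
    (α₂ β₂ γ₂ : ℝ) (h : ℝ → ℝ)
    -- (C₁)
    (hpC : ContinuousOn p (Set.Icc 0 1))
    (hpp : ∀ x ∈ Set.Ioc (0:ℝ) 1, 0 < p x)
    (hqc : ContinuousOn q (Set.Ioc 0 1))
    -- (C₃)
    (hq1 : IntervalIntegrable q volume 0 1)
    -- h well-defined
    (hintp : IntervalIntegrable (fun t => 1 / p t) volume 0 1)
    (hh : ∀ x, h x = ∫ t in (0:ℝ)..x, 1 / p t)
    (hα : α₂ ≠ 0)
    -- f continuous and bounded along the solution
    (hfc : ContinuousOn (fun x => f x (y x)) (Set.Ioc 0 1))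
    (hfb : ∃ C : ℝ, ∀ x ∈ Set.Ioc (0:ℝ) 1, |f x (y x)| ≤ C)
    -- y solves the singular BVP
    (hyc : ContinuousOn y (Set.Icc 0 1))
    (hyd : ∀ x ∈ Set.Ioc (0:ℝ) 1, DifferentiableAt ℝ y x)
    (hode : ∀ x ∈ Set.Ioo (0:ℝ) 1,
      HasDerivAt (fun t => p t * deriv y t) (-(q x * f x (y x))) x)
    (hbc0 : Tendsto (fun x => p x * deriv y x) (nhdsWithin 0 (Set.Ioi 0)) (nhds 0))
    (hbc1 : α₂ * y 1 + β₂ * deriv y 1 = γ₂) :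
    ∀ x ∈ Set.Icc (0:ℝ) 1,
      y x = γ₂ / α₂ +
        ∫ s in (0:ℝ)..1,
          (h 1 - h (max x s) + β₂ / (α₂ * p 1)) * q s * f s (y s) := by
  intro x hx
  obtain ⟨C, hC⟩ := hfb
  set F : ℝ → ℝ := fun s => q s * f s (y s) with hF_def
  set K : ℝ → ℝ := fun s => h 1 - h s with hK_def
  have hp : ∀ x ∈ Ioc (0:ℝ) 1, p x ≠ 0 := fun x hx => (hpp x hx).ne'
  have hF : IntervalIntegrable F volume 0 1 := hq1.mul_bdd_of_continuousOn_Ioc zero_le_one hfc hC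
  have hFc : ContinuousOn F (Ioc 0 1) := hqc.mul hfc
  have hh' : h = fun x => ∫ t in (0:ℝ)..x, 1 / p t := funext hh
  have hKc : ContinuousOn K (Icc 0 1) :=
    continuousOn_const.sub (hh' ▸ hintp.continuousOn_primitive_Icc zero_le_one)
  have hK' : ∀ t ∈ Ioo (0:ℝ) 1, HasDerivAt K (-(1 / p t)) t := fun t ht =>
    (hh' ▸ hasDerivAt_integral_of_continuousOn_Ioo hintp
      ((continuousOn_const.div (hpC.mono Ioc_subset_Icc_self) hp).mono Ioo_subset_Ioc_self)
      ht).const_sub (h 1)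
  have hy' := deriv_eq_neg_integral_div (hpC.mono Ioc_subset_Icc_self) hp hF hFc hyd hode hbc0
  have hy1 : y 1 = γ₂ / α₂ + β₂ / (α₂ * p 1) * ∫ s in (0:ℝ)..1, F s := by
    rw [hy' (right_mem_Ioc.2 zero_lt_one)] at hbc1
    field_simp [hp 1 (right_mem_Ioc.2 zero_lt_one)] at hbc1 ⊢
    linear_combination hbc1
  have hrep := eq_add_integral_comp_max_mul zero_le_one hyc hKc (sub_self _) hF
    (hFc.mono Ioo_subset_Ioc_self) hK' (fun t ht =>
      (hyd t (Ioo_subset_Ioc_self ht)).hasDerivAt.congr_deriv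
        (by rw [hy' (Ioo_subset_Ioc_self ht)]; ring)) hx
  rw [hrep, hy1, ← intervalIntegral.integral_const_mul, add_assoc, ← intervalIntegral.integral_add
    (hF.const_mul _) (intervalIntegrable_comp_max_mul zero_le_one hKc hF hx)]
  congr 1
  refine intervalIntegral.integral_congr fun s _ => ?_
  simp only [hK_def, hF_def]
  ring

theorem solution_satisfies_fredholm_neumann_robin
    (p q : ℝ → ℝ) (f : ℝ → ℝ → ℝ) (y : ℝ → ℝ)
    (α₂ β₂ γ₂ : ℝ) (h : ℝ → ℝ)
    -- (C₁)
    (hpC : ContinuousOn p (Set.Icc 0 1))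
    (hpd : ∀ x ∈ Set.Ioc (0:ℝ) 1, DifferentiableAt ℝ p x)
    (hpp : ∀ x ∈ Set.Ioc (0:ℝ) 1, 0 < p x)
    (hqp : ∀ x ∈ Set.Ioc (0:ℝ) 1, 0 < q x)
    (hqc : ContinuousOn q (Set.Ioc 0 1))
    -- (C₃)
    (hq1 : IntervalIntegrable q volume 0 1)
    (hdouble : IntervalIntegrable
      (fun x => (1 / p x) * ∫ s in (0:ℝ)..x, q s) volume 0 1)
    -- h well-defined
    (hintp : IntervalIntegrable (fun t => 1 / p t) volume 0 1)
    (hh : ∀ x, h x = ∫ t in (0:ℝ)..x, 1 / p t)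
    (hα : α₂ ≠ 0)
    -- f continuous and bounded along the solution
    (hfc : ContinuousOn (fun x => f x (y x)) (Set.Ioc 0 1))
    (hfb : ∃ C : ℝ, ∀ x ∈ Set.Ioc (0:ℝ) 1, |f x (y x)| ≤ C)
    -- y solves the singular BVP
    (hyc : ContinuousOn y (Set.Icc 0 1))
    (hyd : ∀ x ∈ Set.Ioc (0:ℝ) 1, DifferentiableAt ℝ y x)
    (hode : ∀ x ∈ Set.Ioo (0:ℝ) 1,
      HasDerivAt (fun t => p t * deriv y t) (-(q x * f x (y x))) x)
    (hbc0 : Tendsto (fun x => p x * deriv y x) (nhdsWithin 0 (Set.Ioi 0)) (nhds 0))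
    (hbc1 : α₂ * y 1 + β₂ * deriv y 1 = γ₂) :
    ∀ x ∈ Set.Icc (0:ℝ) 1,
      y x = γ₂ / α₂ +
        ∫ s in (0:ℝ)..1,
          (h 1 - h (max x s) + β₂ / (α₂ * p 1)) * q s * f s (y s) :=
  solution_satisfies_fredholm_neumann_robin_general p q f y α₂ β₂ γ₂ h hpC hpp hqc hq1 hintp hh hα
    hfc hfb hyc hyd hode hbc0 hbc1
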